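/- Let E be an arbitrary set. The maps I ↦ Î := {Z(f) : f ∈ I} and Φ ↦ Φ̌ := {f ∈ C^∞(ℝ^E) : Z(f) ∈ Φ} restrict to mutually inverse bijections between the set of all prime proper filters of zerosets of ℝ^E and the set of all prime, proper, C^∞-radical ideals of C^∞(ℝ^E). In particular: if Φ is a prime proper filter of zerosets then Φ̌ is a prime C^∞-radical proper ideal, and if I is a prime C^∞-radical proper ideal then Î is a prime proper filter of zerosets. -/

import Mathlib

noncomputable section

open Set

/-- The continuous linear "restriction" map `ℝ^t → ℝ^s` for `s ⊆ t`. -/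
def restrCLM {E : Type} (s t : Finset E) (h : s ⊆ t) : (↥t → ℝ) →L[ℝ] (↥s → ℝ) :=
  LinearMap.toContinuousLinearMap
    (LinearMap.funLeft ℝ ℝ (fun i : ↥s => (⟨i.1, h i.2⟩ : ↥t)))

/-- A function `f : ℝ^E → ℝ` is (`C^∞`-)smooth iff it factors through the projection onto
finitely many coordinates via an infinitely differentiable function. -/
def IsCinf {E : Type} (f : (E → ℝ) → ℝ) : Prop :=
  ∃ (s : Finset E) (g : (↥s → ℝ) → ℝ),
    ContDiff ℝ (⊤ : ℕ∞) g ∧ ∀ v : E → ℝ, f v = g (fun i => v i.1)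

theorem IsCinf.enlarge {E : Type} {f : (E → ℝ) → ℝ} {s : Finset E} {g : (↥s → ℝ) → ℝ}
    (hg : ContDiff ℝ (⊤ : ℕ∞) g) (hfg : ∀ v, f v = g (fun i => v i.1))
    (t : Finset E) (hst : s ⊆ t) :
    ∃ g' : (↥t → ℝ) → ℝ, ContDiff ℝ (⊤ : ℕ∞) g' ∧ ∀ v, f v = g' (fun i => v i.1) := by
  refine ⟨g ∘ restrCLM s t hst, hg.comp (restrCLM s t hst).contDiff, fun v => ?_⟩
  have h1 : (restrCLM s t hst) (fun i : ↥t => v i.1) = fun i : ↥s => v i.1 := rfl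
  simp only [Function.comp_apply, h1]
  exact hfg v

/-- The ring `C^∞(ℝ^E)` of smooth functions `ℝ^E → ℝ`, as a subring of the ring of all
functions `ℝ^E → ℝ` with pointwise operations. -/
def Cinf (E : Type) : Subring ((E → ℝ) → ℝ) where
  carrier := {f | IsCinf f}
  zero_mem' := ⟨∅, fun _ => 0, contDiff_const, fun _ => rfl⟩
  one_mem' := ⟨∅, fun _ => 1, contDiff_const, fun _ => rfl⟩
  neg_mem' := by
    rintro f ⟨s, g, hg, hfg⟩
    exact ⟨s, -g, hg.neg, fun v => by simp [hfg v]⟩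
  add_mem' := by
    rintro f₁ f₂ ⟨s, g₁, hg₁, hfg₁⟩ ⟨t, g₂, hg₂, hfg₂⟩
    haveI := Classical.decEq E
    obtain ⟨g₁', hg₁', hfg₁'⟩ := IsCinf.enlarge hg₁ hfg₁ (s ∪ t) Finset.subset_union_left
    obtain ⟨g₂', hg₂', hfg₂'⟩ := IsCinf.enlarge hg₂ hfg₂ (s ∪ t) Finset.subset_union_right
    exact ⟨s ∪ t, g₁' + g₂', hg₁'.add hg₂', fun v => by
      simp only [Pi.add_apply, hfg₁' v, hfg₂' v]⟩
  mul_mem' := by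
    rintro f₁ f₂ ⟨s, g₁, hg₁, hfg₁⟩ ⟨t, g₂, hg₂, hfg₂⟩
    haveI := Classical.decEq E
    obtain ⟨g₁', hg₁', hfg₁'⟩ := IsCinf.enlarge hg₁ hfg₁ (s ∪ t) Finset.subset_union_left
    obtain ⟨g₂', hg₂', hfg₂'⟩ := IsCinf.enlarge hg₂ hfg₂ (s ∪ t) Finset.subset_union_right
    exact ⟨s ∪ t, g₁' * g₂', hg₁'.mul hg₂', fun v => by
      simp only [Pi.mul_apply, hfg₁' v, hfg₂' v]⟩

/-- The zeroset of a smooth function on `ℝ^E`. -/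
def Z {E : Type} (f : Cinf E) : Set (E → ℝ) := {v | (f : (E → ℝ) → ℝ) v = 0}

/-- An ideal `I ⊆ C^∞(ℝ^E)` is `C^∞`-radical iff it contains every function whose zeroset
contains the zeroset of some member of `I`. -/
def IsCinfRadical {E : Type} (I : Ideal (Cinf E)) : Prop :=
  ∀ g : Cinf E, (∃ f ∈ I, Z f ⊆ Z g) → g ∈ I

/-- The collection of zerosets of `ℝ^E`. -/
def zeroSets (E : Type) : Set (Set (E → ℝ)) := {X | ∃ f : Cinf E, X = Z f}

/-- A filter of zerosets of `ℝ^E`. -/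
def IsZFilter {E : Type} (Φ : Set (Set (E → ℝ))) : Prop :=
  Φ ⊆ zeroSets E ∧ (Set.univ : Set (E → ℝ)) ∈ Φ ∧
    (∀ F ∈ Φ, ∀ G ∈ Φ, F ∩ G ∈ Φ) ∧
    (∀ F ∈ Φ, ∀ H ∈ zeroSets E, F ⊆ H → H ∈ Φ)

/-- `Ŝ`: the set of zerosets of members of a set `S ⊆ C^∞(ℝ^E)`. -/
def hatSet {E : Type} (S : Set (Cinf E)) : Set (Set (E → ℝ)) := {X | ∃ f ∈ S, X = Z f}

/-- `Î`: the set of zerosets of members of the ideal `I`. -/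
def hatI {E : Type} (I : Ideal (Cinf E)) : Set (Set (E → ℝ)) := hatSet (I : Set (Cinf E))

/-- `Φ̌`: the set of smooth functions whose zeroset belongs to `Φ`. -/
def checkSet {E : Type} (Φ : Set (Set (E → ℝ))) : Set (Cinf E) := {f : Cinf E | Z f ∈ Φ}

end

/-- A prime proper filter of zerosets: a proper filter of zerosets `Φ` such that whenever
a union of two zerosets lies in `Φ`, one of them lies in `Φ`. -/
def IsPrimeZFilter {E : Type} (Φ : Set (Set (E → ℝ))) : Prop :=
  IsZFilter Φ ∧ (∅ : Set (E → ℝ)) ∉ Φ ∧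
    ∀ F ∈ zeroSets E, ∀ G ∈ zeroSets E, F ∪ G ∈ Φ → F ∈ Φ ∨ G ∈ Φ

/-!
Taking zerosets turns `1` into `∅`, products into unions and sums of squares into
intersections, so the ideal axioms for `Φ̌` and the filter axioms for `Î` correspond to each
other, and primality on one side is primality on the other. `C^∞`-radicality says exactly
that membership in `I` depends only on the zeroset, which makes `Î` upward closed and
`(Î)ˇ = I`; conversely `(Φ̌)^ = Φ` holds because every member of `Φ` is a zeroset.
-/

open Set

variable {E : Type}

section ZeroSet

@[simp]
lemma Z_zero : Z (0 : Cinf E) = univ := by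
  ext v; simp [Z]

@[simp]
lemma Z_one : Z (1 : Cinf E) = ∅ := by
  ext v; simp [Z]

lemma Z_mul (f g : Cinf E) : Z (f * g) = Z f ∪ Z g := by
  ext v; simp [Z, mul_eq_zero]

lemma Z_mul_self_add_mul_self (f g : Cinf E) : Z (f * f + g * g) = Z f ∩ Z g := by
  ext v
  simp only [Z, mem_ofPred_eq, mem_inter_iff, Subring.coe_add, Subring.coe_mul, Pi.add_apply,
    Pi.mul_apply]
  exact mul_self_add_mul_self_eq_zero

lemma Z_inter_subset_Z_add (f g : Cinf E) : Z f ∩ Z g ⊆ Z (f + g) := by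
  rintro v ⟨hf, hg⟩
  simp_all [Z]

lemma Z_mem_zeroSets (f : Cinf E) : Z f ∈ zeroSets E := ⟨f, rfl⟩

end ZeroSet

section FilterToIdeal

variable {Φ : Set (Set (E → ℝ))}

def IsZFilter.checkIdeal (hΦ : IsZFilter Φ) : Ideal (Cinf E) where
  carrier := checkSet Φ
  zero_mem' := by simpa [checkSet] using hΦ.2.1
  add_mem' {f g} hf hg :=
    hΦ.2.2.2 _ (hΦ.2.2.1 _ hf _ hg) _ (Z_mem_zeroSets _) (Z_inter_subset_Z_add f g)
  smul_mem' c f hf := by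
    refine hΦ.2.2.2 _ hf _ (Z_mem_zeroSets (c * f)) ?_
    rw [smul_eq_mul, Z_mul]
    exact subset_union_right

lemma IsZFilter.coe_checkIdeal (hΦ : IsZFilter Φ) :
    (hΦ.checkIdeal : Set (Cinf E)) = checkSet Φ := rfl

lemma IsZFilter.isCinfRadical_checkIdeal (hΦ : IsZFilter Φ) : IsCinfRadical hΦ.checkIdeal :=
  fun g ⟨_, hf, hfg⟩ => hΦ.2.2.2 _ hf _ (Z_mem_zeroSets g) hfg

lemma IsPrimeZFilter.isPrime_checkIdeal (hΦ : IsPrimeZFilter Φ) : hΦ.1.checkIdeal.IsPrime := by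
  refine Ideal.isPrime_iff.mpr ⟨fun htop => hΦ.2.1 ?_, fun {f g} hfg => ?_⟩
  · have h1 : (1 : Cinf E) ∈ hΦ.1.checkIdeal := htop ▸ Submodule.mem_top
    simpa [IsZFilter.checkIdeal, checkSet] using h1
  · have hfg' : Z f ∪ Z g ∈ Φ := Z_mul f g ▸ hfg
    exact hΦ.2.2 _ (Z_mem_zeroSets f) _ (Z_mem_zeroSets g) hfg'

lemma hatSet_checkSet (hΦ : Φ ⊆ zeroSets E) : hatSet (checkSet Φ) = Φ := by
  ext X
  constructor
  · rintro ⟨f, hf, rfl⟩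
    exact hf
  · intro hX
    obtain ⟨f, rfl⟩ := hΦ hX
    exact ⟨f, hX, rfl⟩

end FilterToIdeal

namespace IsCinfRadical

variable {I : Ideal (Cinf E)} (hI : IsCinfRadical I)
include hI

lemma Z_mem_hatI_iff (g : Cinf E) : Z g ∈ hatI I ↔ g ∈ I :=
  ⟨fun ⟨f, hf, hfg⟩ => hI g ⟨f, hf, hfg.symm.subset⟩, fun hg => ⟨g, hg, rfl⟩⟩

lemma checkSet_hatI : checkSet (hatI I) = (I : Set (Cinf E)) :=
  Set.ext hI.Z_mem_hatI_iff

lemma isZFilter_hatI : IsZFilter (hatI I) := by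
  refine ⟨fun X ⟨f, _, hX⟩ => ⟨f, hX⟩, ⟨0, I.zero_mem, Z_zero.symm⟩, ?_, ?_⟩
  · rintro _ ⟨f, hf, rfl⟩ _ ⟨g, hg, rfl⟩
    exact ⟨f * f + g * g, I.add_mem (I.mul_mem_left f hf) (I.mul_mem_left g hg),
      (Z_mul_self_add_mul_self f g).symm⟩
  · rintro _ ⟨f, hf, rfl⟩ _ ⟨h, rfl⟩ hfh
    exact (hI.Z_mem_hatI_iff h).2 (hI h ⟨f, hf, hfh⟩)

lemma isPrimeZFilter_hatI (hIp : I.IsPrime) : IsPrimeZFilter (hatI I) := by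
  refine ⟨hI.isZFilter_hatI, fun hempty => hIp.ne_top ?_, ?_⟩
  · rw [Ideal.eq_top_iff_one, ← hI.Z_mem_hatI_iff, Z_one]
    exact hempty
  · rintro _ ⟨f, rfl⟩ _ ⟨g, rfl⟩ hfg
    rw [← Z_mul, hI.Z_mem_hatI_iff] at hfg
    simpa only [hI.Z_mem_hatI_iff] using hIp.mem_or_mem hfg

end IsCinfRadical

/-- `I ↦ Î` and `Φ ↦ Φ̌` restrict to mutually inverse bijections
between prime proper filters of zerosets of `ℝ^E` and prime proper `C^∞`-radical ideals
of `C^∞(ℝ^E)`. -/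
theorem statement12 (E : Type) :
    (∀ Φ : Set (Set (E → ℝ)), IsPrimeZFilter Φ →
      ∃ J : Ideal (Cinf E), (J : Set (Cinf E)) = checkSet Φ ∧ J.IsPrime ∧
        IsCinfRadical J ∧ hatI J = Φ) ∧
    (∀ I : Ideal (Cinf E), I.IsPrime → IsCinfRadical I →
      IsPrimeZFilter (hatI I) ∧ checkSet (hatI I) = (I : Set (Cinf E))) :=
  ⟨fun _ hΦ => ⟨hΦ.1.checkIdeal, hΦ.1.coe_checkIdeal, hΦ.isPrime_checkIdeal,
      hΦ.1.isCinfRadical_checkIdeal, hatSet_checkSet hΦ.1.1⟩,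
    fun _ hIp hI => ⟨hI.isPrimeZFilter_hatI hIp, hI.checkSet_hatI⟩⟩
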